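/- arXiv:2504.17637 — 2 statements merged into one kernel-verified Lean document; each statement's English description precedes it below -/
import Mathlib

section
/- Let W be a band-generator word representing β ∈ B_n. Then nb(W) = nb(β) if and only if |W| = ||β||; that is, W realizes the negative band number of β if and only if W is a shortest word representing β. -/
/-- The braid relations on the free group on `n - 1` Artin generators. -/
def braidRels (n : ℕ) : Set (FreeGroup (Fin (n - 1))) :=
  { r | (∃ i j : Fin (n - 1), (i : ℕ) + 1 < (j : ℕ) ∧
          r = FreeGroup.of i * FreeGroup.of j * (FreeGroup.of i)⁻¹ * (FreeGroup.of j)⁻¹) ∨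
        (∃ i j : Fin (n - 1), (i : ℕ) + 1 = (j : ℕ) ∧
          r = FreeGroup.of i * FreeGroup.of j * FreeGroup.of i *
              (FreeGroup.of j * FreeGroup.of i * FreeGroup.of j)⁻¹) }

/-- The braid group `B_n`, presented with Artin generators `σ_1, …, σ_{n-1}`. -/
abbrev BraidGroup (n : ℕ) := PresentedGroup (braidRels n)

/-- The Artin generator `σ_k` (1-indexed; junk value `1` if `k` is out of range). -/
noncomputable def sigma (n : ℕ) (k : ℕ) : BraidGroup n :=
  if h : k - 1 < n - 1 then PresentedGroup.of (⟨k - 1, h⟩ : Fin (n - 1)) else 1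

/-- The band generator `a_{i,j} = (σ_{j-1}⋯σ_{i+1}) σ_i (σ_{j-1}⋯σ_{i+1})⁻¹`. -/
noncomputable def band (n i j : ℕ) : BraidGroup n :=
  (((List.range' (i + 1) (j - 1 - i)).reverse.map (sigma n)).prod) * sigma n i *
    (((List.range' (i + 1) (j - 1 - i)).reverse.map (sigma n)).prod)⁻¹

/-- The set of band generators `a_{i,j}`, `1 ≤ i < j ≤ n`. -/
def Bands (n : ℕ) : Set (BraidGroup n) :=
  { b | ∃ i j : ℕ, 1 ≤ i ∧ i < j ∧ j ≤ n ∧ b = band n i j }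

/-- The monoid `SQP(n)` of strongly quasipositive braids. -/
def SQP (n : ℕ) : Submonoid (BraidGroup n) := Submonoid.closure (Bands n)

/-- `δ = σ_{n-1} σ_{n-2} ⋯ σ_1`. -/
noncomputable def bdelta (n : ℕ) : BraidGroup n :=
  (((List.range' 1 (n - 1)).reverse.map (sigma n)).prod)

/-- The partial order `V ≤ W` iff `W = P V Q` with `P, Q ∈ SQP(n)`. -/
def bble (n : ℕ) (V W : BraidGroup n) : Prop :=
  ∃ P ∈ SQP n, ∃ Q ∈ SQP n, W = P * V * Q

/-- `inf(β) = max { r : δ^r ≤ β }`. -/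
noncomputable def binf (n : ℕ) (β : BraidGroup n) : ℤ :=
  sSup { r : ℤ | bble n (bdelta n ^ r) β }

/-- `sup(β) = min { s : β ≤ δ^s }`. -/
noncomputable def bsup (n : ℕ) (β : BraidGroup n) : ℤ :=
  sInf { s : ℤ | bble n β (bdelta n ^ s) }

/-- The canonical length `ℓ(β) = sup(β) - inf(β)`. -/
noncomputable def ell (n : ℕ) (β : BraidGroup n) : ℤ := bsup n β - binf n β

/-- A letter `(i, j, ε)` stands for `a_{i,j}` if `ε = true` and `a_{i,j}⁻¹` if `ε = false`. -/
noncomputable def evalLetter (n : ℕ) (l : ℕ × ℕ × Bool) : BraidGroup n :=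
  if l.2.2 then band n l.1 l.2.1 else (band n l.1 l.2.1)⁻¹

/-- A band-generator word: every letter indexes an honest band generator. -/
def IsWord (n : ℕ) (W : List (ℕ × ℕ × Bool)) : Prop :=
  ∀ l ∈ W, 1 ≤ l.1 ∧ l.1 < l.2.1 ∧ l.2.1 ≤ n

/-- `W` represents the braid `β`. -/
def Represents (n : ℕ) (W : List (ℕ × ℕ × Bool)) (β : BraidGroup n) : Prop :=
  IsWord n W ∧ (W.map (evalLetter n)).prod = β

/-- The number of negative bands in the word `W`. -/
def nbWord (W : List (ℕ × ℕ × Bool)) : ℕ := (W.filter fun l => !l.2.2).length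

/-- The negative band number `nb(β)` of a braid. -/
noncomputable def nb (n : ℕ) (β : BraidGroup n) : ℕ :=
  sInf { m : ℕ | ∃ W, Represents n W β ∧ nbWord W = m }

/-- The negative band number `nb([β])` of a conjugacy class. -/
noncomputable def nbConj (n : ℕ) (β : BraidGroup n) : ℕ :=
  sInf { m : ℕ | ∃ β' : BraidGroup n, IsConj β β' ∧ nb n β' = m }

/-- The minimal band-generator word length `‖β‖`. -/
noncomputable def wordLen (n : ℕ) (β : BraidGroup n) : ℕ :=
  sInf { m : ℕ | ∃ W, Represents n W β ∧ W.length = m }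

/-- The minimal length of a positive band-generator word representing `A`. -/
noncomputable def posLen (n : ℕ) (A : BraidGroup n) : ℕ :=
  sInf { m : ℕ | ∃ W, Represents n W A ∧ (∀ l ∈ W, l.2.2 = true) ∧ W.length = m }

/-- Canonical factors: `e ≤ A ≤ δ`. -/
def CnFct (n : ℕ) : Set (BraidGroup n) :=
  { A | bble n 1 A ∧ bble n A (bdelta n) }

/-- `A ≺ B` iff `B = A Q` for a canonical factor `Q`. -/
def prec (n : ℕ) (A B : BraidGroup n) : Prop :=
  ∃ Q ∈ CnFct n, B = A * Q

/-- `A B` is maximally left-weighted. -/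
def MLW (n : ℕ) (A B : BraidGroup n) : Prop :=
  ¬ ∃ A' ∈ CnFct n, ∃ B' ∈ CnFct n, A * B = A' * B' ∧ prec n A A' ∧ A ≠ A'

/-- `β = δ^r A_1 ⋯ A_k` is a left-canonical factorization. -/
def IsLCF (n : ℕ) (β : BraidGroup n) (r : ℤ) (A : List (BraidGroup n)) : Prop :=
  β = bdelta n ^ r * A.prod ∧
  (∀ X ∈ A, X ∈ CnFct n ∧ X ≠ 1 ∧ X ≠ bdelta n) ∧
  A.Chain' (MLW n)

/-- The super summit set `SSS([β])`: conjugates of `β` of minimal canonical length. -/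
def SSS (n : ℕ) (β : BraidGroup n) : Set (BraidGroup n) :=
  { β' | IsConj β β' ∧ ∀ γ : BraidGroup n, IsConj β γ → ell n β' ≤ ell n γ }

/-- The summit set `SS([β])`: conjugates of `β` of maximal infimum. -/
def SS (n : ℕ) (β : BraidGroup n) : Set (BraidGroup n) :=
  { β' | IsConj β β' ∧ ∀ γ : BraidGroup n, IsConj β γ → binf n γ ≤ binf n β' }

/-- The writhe homomorphism, sending each `σ_i` to `1 ∈ ℤ`. -/
noncomputable def writheHom (n : ℕ) : BraidGroup n →* Multiplicative ℤ :=
  PresentedGroup.toGroup (f := fun _ => Multiplicative.ofAdd (1 : ℤ)) (by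
    rintro r (⟨i, j, hij, rfl⟩ | ⟨i, j, hij, rfl⟩) <;>
      (simp [map_mul, map_inv, FreeGroup.lift_apply_of]))

/-- The writhe (exponent sum) of a braid. -/
noncomputable def writhe (n : ℕ) (β : BraidGroup n) : ℤ :=
  Multiplicative.toAdd (writheHom n β)

lemma writhe_one (n : ℕ) : writhe n 1 = 0 := by simp [writhe]

lemma writhe_mul (n : ℕ) (x y : BraidGroup n) : writhe n (x * y) = writhe n x + writhe n y := by
  simp [writhe, map_mul]

lemma writhe_sigma (n i : ℕ) (h : i - 1 < n - 1) : writhe n (sigma n i) = 1 := by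
  simp [writhe, sigma, h, writheHom, PresentedGroup.toGroup.of]

lemma writhe_band (n i j : ℕ) (h1 : 1 ≤ i) (h2 : i < j) (h3 : j ≤ n) :
    writhe n (band n i j) = 1 := by
  have hi : i - 1 < n - 1 := by omega
  simp [band, writhe, map_mul, map_inv]
  have := writhe_sigma n i hi
  simp [writhe] at this
  simp [this]

lemma length_eq_writhe (n : ℕ) : ∀ (W : List (ℕ × ℕ × Bool)), IsWord n W →
    (W.length : ℤ) = writhe n (W.map (evalLetter n)).prod + 2 * nbWord W := by
  intro W
  induction W with
  | nil => intro _; simp [nbWord, writhe_one]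
  | cons l W ih =>
    intro hW
    have hl := hW l List.mem_cons_self
    have hW' : IsWord n W := fun x hx => hW x (List.mem_cons_of_mem _ hx)
    have hband : writhe n (band n l.1 l.2.1) = 1 :=
      writhe_band n l.1 l.2.1 hl.1 hl.2.1 hl.2.2
    have hlet : writhe n (evalLetter n l) = if l.2.2 then 1 else -1 := by
      by_cases hb : l.2.2
      · simp [evalLetter, hb, hband]
      · have : writhe n ((band n l.1 l.2.1)⁻¹) = -1 := by
          simp [writhe, map_inv] at hband ⊢; omega
        simp [evalLetter, hb, this]
    have hnb : (nbWord (l :: W) : ℤ) = (if l.2.2 then 0 else 1) + nbWord W := by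
      by_cases hb : l.2.2 <;> simp [nbWord, List.filter, hb] <;> omega
    rw [List.map_cons, List.prod_cons, writhe_mul, hlet]
    rw [List.length_cons, hnb]
    push_cast
    rw [ih hW']
    by_cases hb : l.2.2 <;> simp [hb] <;> ring_nf <;> omega

lemma length_eq_writhe' (n : ℕ) (β : BraidGroup n) (W : List (ℕ × ℕ × Bool))
    (h : Represents n W β) :
    (W.length : ℤ) = writhe n β + 2 * nbWord W := by
  rw [← h.2]; exact length_eq_writhe n W h.1


/-- a word `W` representing `β` realizes `nb(β)` iff it is a shortest word
representing `β`. -/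
theorem statement_12 (n : ℕ) (W : List (ℕ × ℕ × Bool)) (β : BraidGroup n)
    (h : Represents n W β) :
    nbWord W = nb n β ↔ W.length = wordLen n β := by
  have hne1 : (nbWord W) ∈ { m : ℕ | ∃ W', Represents n W' β ∧ nbWord W' = m } := ⟨W, h, rfl⟩
  have hne2 : (W.length) ∈ { m : ℕ | ∃ W', Represents n W' β ∧ W'.length = m } := ⟨W, h, rfl⟩
  obtain ⟨W1, hW1, hW1e⟩ := Nat.sInf_mem ⟨_, hne1⟩
  obtain ⟨W2, hW2, hW2e⟩ := Nat.sInf_mem ⟨_, hne2⟩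
  have h1 : wordLen n β ≤ W1.length := Nat.sInf_le ⟨W1, hW1, rfl⟩
  have h2 : nb n β ≤ nbWord W2 := Nat.sInf_le ⟨W2, hW2, rfl⟩
  have e1 := length_eq_writhe' n β W1 hW1
  have e2 := length_eq_writhe' n β W2 hW2
  have e0 := length_eq_writhe' n β W h
  have ha : nb n β = nbWord W1 := hW1e.symm
  have hb2 : wordLen n β = W2.length := hW2e.symm
  omega
end

section
/- For every canonical factor A ∈ CnFct(B_n) there exist canonical factors A', A'' ∈ CnFct(B_n) such that A'A = AA'' = δ. -/
namespace Br14

variable {n : ℕ}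

/-- σ_{a+m-1} σ_{a+m-2} ⋯ σ_a -/
noncomputable def Pp (n a m : ℕ) : BraidGroup n :=
  ((List.range' a m).reverse.map (sigma n)).prod

lemma Pp_zero (a : ℕ) : Pp n a 0 = 1 := by simp [Pp]

lemma Pp_succ_high (a m : ℕ) : Pp n a (m+1) = sigma n (a+m) * Pp n a m := by
  have h := List.range'_concat (step := 1) (s := a) (n := m)
  simp only [one_mul] at h
  simp [Pp, h]

lemma Pp_succ_low (a m : ℕ) : Pp n a (m+1) = Pp n (a+1) m * sigma n a := by
  have h := List.range'_succ (s := a) (n := m) (step := 1)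
  simp [Pp, h]

lemma band_eq (i m : ℕ) :
    band n i (i+1+m) = Pp n (i+1) m * sigma n i * (Pp n (i+1) m)⁻¹ := by
  have h : i + 1 + m - 1 - i = m := by omega
  simp [band, Pp, h]

lemma bdelta_eq : bdelta n = Pp n 1 (n-1) := rfl

lemma sigma_comm {k l : ℕ} (hk : 1 ≤ k) (hkl : k + 1 < l) (hl : l ≤ n - 1) :
    sigma n k * sigma n l = sigma n l * sigma n k := by
  have hk' : k - 1 < n - 1 := by omega
  have hl' : l - 1 < n - 1 := by omega
  have hr : (FreeGroup.of (⟨k-1,hk'⟩ : Fin (n-1)) * FreeGroup.of (⟨l-1,hl'⟩ : Fin (n-1)) *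
      (FreeGroup.of (⟨k-1,hk'⟩ : Fin (n-1)))⁻¹ * (FreeGroup.of (⟨l-1,hl'⟩ : Fin (n-1)))⁻¹)
      ∈ braidRels n := Or.inl ⟨_, _, by simp; omega, rfl⟩
  have h1 : PresentedGroup.mk (braidRels n)
      (FreeGroup.of (⟨k-1,hk'⟩ : Fin (n-1)) * FreeGroup.of (⟨l-1,hl'⟩ : Fin (n-1)) *
      (FreeGroup.of (⟨k-1,hk'⟩ : Fin (n-1)))⁻¹ * (FreeGroup.of (⟨l-1,hl'⟩ : Fin (n-1)))⁻¹) = 1 :=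
    (QuotientGroup.eq_one_iff _).mpr (Subgroup.subset_normalClosure hr)
  simp only [map_mul, map_inv] at h1
  have h2 := mul_inv_eq_one.mp h1
  have h3 := mul_inv_eq_iff_eq_mul.mp h2
  simp only [sigma, dif_pos hk', dif_pos hl']
  exact h3

lemma sigma_braid {k : ℕ} (hk : 1 ≤ k) (hk2 : k + 1 ≤ n - 1) :
    sigma n k * sigma n (k+1) * sigma n k = sigma n (k+1) * sigma n k * sigma n (k+1) := by
  have hk' : k - 1 < n - 1 := by omega
  have hl' : k + 1 - 1 < n - 1 := by omega
  have hr : (FreeGroup.of (⟨k-1,hk'⟩ : Fin (n-1)) * FreeGroup.of (⟨k+1-1,hl'⟩ : Fin (n-1)) *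
      FreeGroup.of (⟨k-1,hk'⟩ : Fin (n-1)) *
      (FreeGroup.of (⟨k+1-1,hl'⟩ : Fin (n-1)) * FreeGroup.of (⟨k-1,hk'⟩ : Fin (n-1)) *
       FreeGroup.of (⟨k+1-1,hl'⟩ : Fin (n-1)))⁻¹) ∈ braidRels n :=
    Or.inr ⟨_, _, by simp; omega, rfl⟩
  have h1 : PresentedGroup.mk (braidRels n) _ = 1 :=
    (QuotientGroup.eq_one_iff _).mpr (Subgroup.subset_normalClosure hr)
  simp only [map_mul, map_inv] at h1
  have h2 := mul_inv_eq_one.mp h1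
  simp only [sigma, dif_pos hk', dif_pos hl']
  exact h2

lemma sigma_comm_Pp {k a m : ℕ} (hk1 : 1 ≤ k) (hk2 : k ≤ n - 1) (ha : 1 ≤ a)
    (ham : a + m ≤ n)
    (h : ∀ t, a ≤ t → t < a + m → t + 1 < k ∨ k + 1 < t) :
    sigma n k * Pp n a m = Pp n a m * sigma n k := by
  induction m with
  | zero => simp [Pp_zero]
  | succ m ih =>
    rw [Pp_succ_high]
    have ht := h (a+m) (by omega) (by omega)
    have hc : sigma n k * sigma n (a+m) = sigma n (a+m) * sigma n k := by
      rcases ht with ht | ht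
      · exact (sigma_comm (by omega) ht (by omega)).symm
      · exact sigma_comm hk1 ht (by omega)
    rw [← mul_assoc, hc, mul_assoc, ih (by omega) (fun t h1 h2 => h t h1 (by omega)),
      ← mul_assoc]

/-- `D_m σ_{t+1} = σ_t D_m` for `1 ≤ t`, `t+1 ≤ m ≤ n-1`, where `D_m = σ_m ⋯ σ_1`. -/
lemma D_shift {m t : ℕ} (h1 : 1 ≤ t) (hm : t + 1 ≤ m) (hn : m ≤ n - 1) :
    Pp n 1 m * sigma n (t+1) = sigma n t * Pp n 1 m := by
  induction m with
  | zero => omega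
  | succ m ih =>
    rcases Nat.lt_or_ge (t+1) (m+1) with hlt | hge
    · -- t+1 ≤ m, use ih
      rw [Pp_succ_high, mul_assoc, ih (by omega) (by omega), ← mul_assoc,
        (sigma_comm h1 (by omega) (by omega) : sigma n t * sigma n (1+m) = _).symm, mul_assoc]
    · -- t + 1 = m + 1, i.e. t = m; then m ≥ 1, write m = s+1
      have htm : t = m := by omega
      subst htm
      obtain ⟨s, rfl⟩ : ∃ s, t = s + 1 := ⟨t - 1, by omega⟩
      -- Pp 1 (s+2) = σ_{s+2} σ_{s+1} Pp 1 s
      have e1 : Pp n 1 (s+1+1) = sigma n (s+2) * (sigma n (s+1) * Pp n 1 s) := by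
        rw [Pp_succ_high, Pp_succ_high, show 1+(s+1) = s+2 by omega, show 1+s = s+1 by omega]
      have hcomm : sigma n (s+2) * Pp n 1 s = Pp n 1 s * sigma n (s+2) :=
        sigma_comm_Pp (by omega) (by omega) le_rfl (by omega)
          (fun t ht1 ht2 => Or.inl (by omega))
      calc Pp n 1 (s+1+1) * sigma n (s+1+1)
          = sigma n (s+2) * sigma n (s+1) * (Pp n 1 s * sigma n (s+2)) := by
            rw [e1]; group
        _ = sigma n (s+2) * sigma n (s+1) * sigma n (s+2) * Pp n 1 s := by
            rw [← hcomm]; group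
        _ = sigma n (s+1) * (sigma n (s+2) * sigma n (s+1) * Pp n 1 s) := by
            rw [← sigma_braid (by omega) (by omega)]; group
        _ = sigma n (s+1) * Pp n 1 (s+1+1) := by rw [e1]; group

lemma delta_sigma {t : ℕ} (h1 : 1 ≤ t) (h2 : t + 1 ≤ n - 1) :
    bdelta n * sigma n (t+1) = sigma n t * bdelta n := by
  rw [bdelta_eq]; exact D_shift h1 h2 le_rfl

lemma delta_sigma_inv {t : ℕ} (h1 : 1 ≤ t) (h2 : t + 1 ≤ n - 1) :
    bdelta n * (sigma n (t+1))⁻¹ = (sigma n t)⁻¹ * bdelta n := by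
  have h := delta_sigma (n := n) h1 h2
  calc bdelta n * (sigma n (t+1))⁻¹
      = (sigma n t)⁻¹ * (sigma n t * bdelta n) * (sigma n (t+1))⁻¹ := by group
    _ = (sigma n t)⁻¹ * (bdelta n * sigma n (t+1)) * (sigma n (t+1))⁻¹ := by rw [h]
    _ = (sigma n t)⁻¹ * bdelta n := by group

lemma delta_Pp {a m : ℕ} (ha : 1 ≤ a) (h : a + m ≤ n - 1) :
    bdelta n * Pp n (a+1) m = Pp n a m * bdelta n := by
  induction m with
  | zero => simp [Pp_zero]
  | succ m ih =>
    rw [Pp_succ_high, Pp_succ_high, ← mul_assoc,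
      show a + 1 + m = (a + m) + 1 by omega,
      delta_sigma (by omega) (by omega), mul_assoc, ih (by omega), ← mul_assoc]

lemma delta_Pp_inv {a m : ℕ} (ha : 1 ≤ a) (h : a + m ≤ n - 1) :
    bdelta n * (Pp n (a+1) m)⁻¹ = (Pp n a m)⁻¹ * bdelta n := by
  have hd := delta_Pp (n := n) ha h
  have : (Pp n (a+1) m)⁻¹ = (bdelta n)⁻¹ * (Pp n a m)⁻¹ * bdelta n := by
    rw [← mul_inv_rev, ← hd]; group
  rw [this]; group

/-- (A): `δ a_{i+1,j+1} = a_{i,j} δ`. -/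
lemma bandA {i m : ℕ} (hi : 1 ≤ i) (hj : i + 1 + m ≤ n - 1) :
    bdelta n * band n (i+1) (i+1+m+1) = band n i (i+1+m) * bdelta n := by
  have e : i + 1 + m + 1 = (i+1) + 1 + m := by omega
  rw [e, band_eq, band_eq]
  calc bdelta n * (Pp n (i+2) m * sigma n (i+1) * (Pp n (i+2) m)⁻¹)
      = (bdelta n * Pp n (i+2) m) * sigma n (i+1) * (Pp n (i+2) m)⁻¹ := by group
    _ = Pp n (i+1) m * (bdelta n * sigma n (i+1)) * (Pp n (i+2) m)⁻¹ := by
        rw [delta_Pp (by omega) (by omega)]; group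
    _ = Pp n (i+1) m * sigma n i * (bdelta n * (Pp n (i+2) m)⁻¹) := by
        rw [delta_sigma hi (by omega)]; group
    _ = Pp n (i+1) m * sigma n i * (Pp n (i+1) m)⁻¹ * bdelta n := by
        rw [delta_Pp_inv (by omega) (by omega)]; group

/-- (L3): `σ_k a_{k,n'} σ_k⁻¹ = a_{k+1,n'}` where `n' = k+2+m`. -/
lemma band_step {k m : ℕ} (hk : 1 ≤ k) (h : k + 2 + m ≤ n) :
    sigma n k * band n k (k+2+m) * (sigma n k)⁻¹ = band n (k+1) (k+2+m) := by
  have hb1 := band_eq (n := n) k (m+1)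
  rw [show k+1+(m+1) = k+2+m by omega] at hb1
  have hb2 := band_eq (n := n) (k+1) m
  rw [show k+1+1+m = k+2+m by omega] at hb2
  rw [hb1, hb2, Pp_succ_low]
  have hM : sigma n k * Pp n (k+1+1) m = Pp n (k+1+1) m * sigma n k :=
    sigma_comm_Pp (n := n) (k := k) (a := k+1+1) (m := m) hk (by omega) (by omega) (by omega)
      (fun t h1 h2 => Or.inr (by omega))
  have hb := sigma_braid (n := n) (k := k) hk (by omega)
  have hM' : (Pp n (k+1+1) m)⁻¹ * (sigma n k)⁻¹ = (sigma n k)⁻¹ * (Pp n (k+1+1) m)⁻¹ := by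
    rw [← mul_inv_rev, hM, mul_inv_rev]
  have mid : sigma n k * (sigma n (k+1) * (sigma n k * ((sigma n (k+1))⁻¹ * (sigma n k)⁻¹)))
      = sigma n (k+1) := by
    rw [show sigma n k * (sigma n (k+1) * (sigma n k * ((sigma n (k+1))⁻¹ * (sigma n k)⁻¹)))
      = (sigma n k * sigma n (k+1) * sigma n k) * ((sigma n (k+1))⁻¹ * (sigma n k)⁻¹) by group, hb]
    group
  calc sigma n k * (Pp n (k+1+1) m * sigma n (k+1) * sigma n k *
        (Pp n (k+1+1) m * sigma n (k+1))⁻¹) * (sigma n k)⁻¹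
      = (sigma n k * Pp n (k+1+1) m) * (sigma n (k+1) * sigma n k * (sigma n (k+1))⁻¹) *
        ((Pp n (k+1+1) m)⁻¹ * (sigma n k)⁻¹) := by group
    _ = (Pp n (k+1+1) m * sigma n k) * (sigma n (k+1) * sigma n k * (sigma n (k+1))⁻¹) *
        ((sigma n k)⁻¹ * (Pp n (k+1+1) m)⁻¹) := by rw [hM, hM']
    _ = Pp n (k+1+1) m * (sigma n k * (sigma n (k+1) * (sigma n k *
        ((sigma n (k+1))⁻¹ * (sigma n k)⁻¹)))) * (Pp n (k+1+1) m)⁻¹ := by group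
    _ = Pp n (k+1+1) m * sigma n (k+1) * (Pp n (k+1+1) m)⁻¹ := by rw [mid]

/-- (B): `δ a_{1,m+2} = a_{m+1,n} δ`. -/
lemma bandB {m : ℕ} (h : m + 2 ≤ n) :
    bdelta n * band n 1 (m+2) = band n (m+1) n * bdelta n := by
  induction m with
  | zero =>
    have hδ : bdelta n = Pp n 2 (n-2) * sigma n 1 := by
      have hp := Pp_succ_low (n := n) 1 (n-2)
      rw [show n-2+1 = n-1 by omega] at hp
      rw [bdelta_eq, hp]
    have hbn : band n 1 n = Pp n 2 (n-2) * sigma n 1 * (Pp n 2 (n-2))⁻¹ := by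
      have hb := band_eq (n := n) 1 (n-2)
      rw [show 1+1+(n-2) = n by omega] at hb
      exact hb
    have hb2 : band n 1 (0+2) = sigma n 1 := by
      have hb := band_eq (n := n) 1 0
      rw [show 1+1+0 = 0+2 by norm_num] at hb
      simpa [Pp_zero] using hb
    rw [hb2, show (0:ℕ)+1 = 1 by norm_num, hbn, hδ]
    group
  | succ m ih =>
    have e : band n 1 (m+1+2) = sigma n (m+2) * band n 1 (m+2) * (sigma n (m+2))⁻¹ := by
      have hb1 := band_eq (n := n) 1 (m+1)
      rw [show 1+1+(m+1) = m+1+2 by omega] at hb1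
      have hb2 := band_eq (n := n) 1 m
      rw [show 1+1+m = m+2 by omega] at hb2
      rw [hb1, hb2, Pp_succ_high, show 2+m = m+2 by omega]
      group
    have hstep := band_step (n := n) (k := m+1) (m := n-m-3) (by omega) (by omega)
    rw [show m+1+2+(n-m-3) = n by omega] at hstep
    calc bdelta n * band n 1 (m+1+2)
        = (bdelta n * sigma n (m+1+1)) * band n 1 (m+2) * (sigma n (m+2))⁻¹ := by
          rw [e]; group
      _ = sigma n (m+1) * (bdelta n * band n 1 (m+2)) * (sigma n (m+2))⁻¹ := by
          rw [delta_sigma (by omega) (by omega)]; group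
      _ = sigma n (m+1) * band n (m+1) n * (bdelta n * (sigma n (m+1+1))⁻¹) := by
          rw [ih (by omega)]; group
      _ = sigma n (m+1) * band n (m+1) n * ((sigma n (m+1))⁻¹ * bdelta n) := by
          rw [delta_sigma_inv (by omega) (by omega)]
      _ = (sigma n (m+1) * band n (m+1) n * (sigma n (m+1))⁻¹) * bdelta n := by group
      _ = band n (m+1+1) n * bdelta n := by rw [hstep]

lemma conj_band_mem {i j : ℕ} (hi : 1 ≤ i) (hij : i < j) (hj : j ≤ n) :
    bdelta n * band n i j * (bdelta n)⁻¹ ∈ Bands n := by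
  rcases Nat.lt_or_ge i 2 with h1 | h2
  · -- i = 1
    have hi1 : i = 1 := by omega
    subst hi1
    have hB := bandB (n := n) (m := j - 2) (by omega)
    rw [show j-2+2 = j by omega, show j-2+1 = j-1 by omega] at hB
    refine ⟨j-1, n, by omega, by omega, le_rfl, ?_⟩
    rw [hB]; group
  · have hA := bandA (n := n) (i := i-1) (m := j-i-1) (by omega) (by omega)
    rw [show i-1+1+(j-i-1)+1 = j by omega, show i-1+1+(j-i-1) = j-1 by omega,
      show i-1+1 = i by omega] at hA
    refine ⟨i-1, j-1, by omega, by omega, by omega, ?_⟩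
    rw [hA]; group

lemma conj_band_mem' {i j : ℕ} (hi : 1 ≤ i) (hij : i < j) (hj : j ≤ n) :
    (bdelta n)⁻¹ * band n i j * bdelta n ∈ Bands n := by
  rcases Nat.lt_or_ge j n with h1 | h2
  · have hA := bandA (n := n) (i := i) (m := j-i-1) hi (by omega)
    rw [show i+1+(j-i-1)+1 = j+1 by omega, show i+1+(j-i-1) = j by omega] at hA
    refine ⟨i+1, j+1, by omega, by omega, by omega, ?_⟩
    rw [show (bdelta n)⁻¹ * band n i j * bdelta n
      = (bdelta n)⁻¹ * (band n i j * bdelta n) by group, ← hA]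
    group
  · have hjn : j = n := by omega
    have hB := bandB (n := n) (m := i - 1) (by omega)
    rw [show i-1+2 = i+1 by omega, show i-1+1 = i by omega] at hB
    refine ⟨1, i+1, le_rfl, by omega, by omega, ?_⟩
    rw [hjn, show (bdelta n)⁻¹ * band n i n * bdelta n
      = (bdelta n)⁻¹ * (band n i n * bdelta n) by group, ← hB]
    group

lemma sqp_conj {g x : BraidGroup n} (hx : x ∈ SQP n)
    (hg : ∀ b ∈ Bands n, g * b * g⁻¹ ∈ Bands n) : g * x * g⁻¹ ∈ SQP n := by
  induction hx using Submonoid.closure_induction with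
  | mem b hb => exact Submonoid.subset_closure (hg b hb)
  | one => simpa using (one_mem (SQP n))
  | mul a b _ _ ha hb =>
    have : g * (a * b) * g⁻¹ = (g * a * g⁻¹) * (g * b * g⁻¹) := by group
    rw [this]; exact mul_mem ha hb

lemma sqp_conj_delta {x : BraidGroup n} (hx : x ∈ SQP n) :
    bdelta n * x * (bdelta n)⁻¹ ∈ SQP n :=
  sqp_conj hx (by rintro b ⟨i, j, hi, hij, hj, rfl⟩; exact conj_band_mem hi hij hj)

lemma sqp_conj_delta' {x : BraidGroup n} (hx : x ∈ SQP n) :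
    (bdelta n)⁻¹ * x * bdelta n ∈ SQP n := by
  have := sqp_conj (g := (bdelta n)⁻¹) hx
    (by rintro b ⟨i, j, hi, hij, hj, rfl⟩
        rw [inv_inv]
        exact conj_band_mem' hi hij hj)
  simpa using this

end Br14

/-- every canonical factor `A` has complements `A'` and `A''` with
`A' A = A A'' = δ`. -/
theorem statement_14 (n : ℕ) (hn : 2 ≤ n) (A : BraidGroup n) (hA : A ∈ CnFct n) :
    ∃ A' ∈ CnFct n, ∃ A'' ∈ CnFct n, A' * A = bdelta n ∧ A * A'' = bdelta n := by
  obtain ⟨⟨P1, hP1, Q1, hQ1, hA1⟩, ⟨P, hP, Q, hQ, hδ⟩⟩ := hA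
  have hAsqp : A ∈ SQP n := by
    rw [hA1, mul_one]  -- A = P1 * 1 * Q1
    exact mul_mem hP1 hQ1
  set A' := (bdelta n * Q * (bdelta n)⁻¹) * P with hA'def
  set A'' := Q * ((bdelta n)⁻¹ * P * bdelta n) with hA''def
  have hA'sqp : A' ∈ SQP n := mul_mem (Br14.sqp_conj_delta hQ) hP
  have hA''sqp : A'' ∈ SQP n := mul_mem hQ (Br14.sqp_conj_delta' hP)
  have hA'A : A' * A = bdelta n := by
    rw [hA'def, hδ]; group
  have hAA'' : A * A'' = bdelta n := by
    rw [hA''def, hδ]; group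
  refine ⟨A', ⟨⟨A', hA'sqp, 1, one_mem _, by group⟩, ⟨1, one_mem _, A, hAsqp, by
    rw [← hA'A]; group⟩⟩, A'', ⟨⟨A'', hA''sqp, 1, one_mem _, by group⟩,
    ⟨A, hAsqp, 1, one_mem _, by rw [← hAA'']; group⟩⟩, hA'A, hAA''⟩
end
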